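/- Let L ≥ 2 be an integer, N = 2^L, ℓ ∈ {1,…,L−1}, and let A ∈ ℂ^{N×N} be such that for every i ∈ {1,…,N/2^ℓ} and every j ∈ {1,…,2^ℓ}, the submatrix A_{R^(ℓ)_i, C^(ℓ)_j} has rank at most 1. Then there exist matrices X, Y ∈ ℂ^{N×N} with supp(X) ⊆ supp(J_{2^ℓ} ⊗ I_{N/2^ℓ}), supp(Y) ⊆ supp(I_{2^ℓ} ⊗ J_{N/2^ℓ}), and A = XY. -/
import Mathlib


open Matrix Kronecker

/-- The `n × n` all-ones matrix `J_n`. -/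
def Jmat (n : ℕ) : Matrix (Fin n) (Fin n) ℂ := Matrix.of fun _ _ => 1

lemma two_pow_div (L ℓ : ℕ) (h : ℓ ≤ L) : 2 ^ L / 2 ^ ℓ = 2 ^ (L - ℓ) :=
  Nat.pow_div h (by norm_num)

lemma two_pow_mul_div (L ℓ : ℕ) (h : ℓ ≤ L) : 2 ^ ℓ * (2 ^ L / 2 ^ ℓ) = 2 ^ L :=
  Nat.mul_div_cancel' (pow_dvd_pow 2 h)

lemma bfly_dim (L ℓ : ℕ) (h1 : 1 ≤ ℓ) (h2 : ℓ ≤ L) :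
    2 ^ (ℓ - 1) * (2 * (2 ^ L / 2 ^ ℓ)) = 2 ^ L := by
  rw [two_pow_div L ℓ h2, show (2 : ℕ) * 2 ^ (L - ℓ) = 2 ^ (L - ℓ + 1) by rw [pow_succ]; ring,
    ← pow_add]
  congr 1
  omega

/-- Reindexing equivalence `Fin 2^(ℓ-1) × (Fin 2 × Fin (2^L/2^ℓ)) ≃ Fin 2^L`,
sending `(a, (b, c))` to the lexicographic index `a·(2·2^L/2^ℓ) + b·(2^L/2^ℓ) + c`. -/
def bflyEquiv (L ℓ : ℕ) (h1 : 1 ≤ ℓ) (h2 : ℓ ≤ L) :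
    Fin (2 ^ (ℓ - 1)) × (Fin 2 × Fin (2 ^ L / 2 ^ ℓ)) ≃ Fin (2 ^ L) :=
  ((Equiv.refl _).prodCongr finProdFinEquiv).trans
    (finProdFinEquiv.trans (finCongr (bfly_dim L ℓ h1 h2)))

/-- The butterfly support `S_ℓ = I_{2^{ℓ-1}} ⊗ J_2 ⊗ I_{N/2^ℓ}`, as an `N × N` matrix,
`N = 2^L`. -/
def bflySupp (L ℓ : ℕ) (h1 : 1 ≤ ℓ) (h2 : ℓ ≤ L) : Matrix (Fin (2 ^ L)) (Fin (2 ^ L)) ℂ :=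
  Matrix.reindex (bflyEquiv L ℓ h1 h2) (bflyEquiv L ℓ h1 h2)
    ((1 : Matrix (Fin (2 ^ (ℓ - 1))) (Fin (2 ^ (ℓ - 1))) ℂ) ⊗ₖ
      (Jmat 2 ⊗ₖ (1 : Matrix (Fin (2 ^ L / 2 ^ ℓ)) (Fin (2 ^ L / 2 ^ ℓ)) ℂ)))

/-- Reindexing equivalence `Fin 2^ℓ × Fin (2^L/2^ℓ) ≃ Fin 2^L` (lexicographic). -/
def blockEquiv (L ℓ : ℕ) (h : ℓ ≤ L) : Fin (2 ^ ℓ) × Fin (2 ^ L / 2 ^ ℓ) ≃ Fin (2 ^ L) :=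
  finProdFinEquiv.trans (finCongr (two_pow_mul_div L ℓ h))

/-- The matrix `J_{2^ℓ} ⊗ I_{N/2^ℓ}`, as an `N × N` matrix, `N = 2^L`. -/
def JkronI (L ℓ : ℕ) (h : ℓ ≤ L) : Matrix (Fin (2 ^ L)) (Fin (2 ^ L)) ℂ :=
  Matrix.reindex (blockEquiv L ℓ h) (blockEquiv L ℓ h)
    (Jmat (2 ^ ℓ) ⊗ₖ (1 : Matrix (Fin (2 ^ L / 2 ^ ℓ)) (Fin (2 ^ L / 2 ^ ℓ)) ℂ))

/-- The matrix `I_{2^ℓ} ⊗ J_{N/2^ℓ}`, as an `N × N` matrix, `N = 2^L`. -/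
def IkronJ (L ℓ : ℕ) (h : ℓ ≤ L) : Matrix (Fin (2 ^ L)) (Fin (2 ^ L)) ℂ :=
  Matrix.reindex (blockEquiv L ℓ h) (blockEquiv L ℓ h)
    ((1 : Matrix (Fin (2 ^ ℓ)) (Fin (2 ^ ℓ)) ℂ) ⊗ₖ Jmat (2 ^ L / 2 ^ ℓ))

/-- The `k`-th element of the canonical row index set `R^(ℓ)_i` (0-based):
`i + k·(N/2^ℓ)`, for `i ∈ Fin (N/2^ℓ)`, `k ∈ Fin 2^ℓ`, `N = 2^L`. -/
def rowIdx (L ℓ : ℕ) (h : ℓ ≤ L) (i : Fin (2 ^ L / 2 ^ ℓ)) (k : Fin (2 ^ ℓ)) : Fin (2 ^ L) :=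
  ⟨(i : ℕ) + (k : ℕ) * (2 ^ L / 2 ^ ℓ), by
    have hi := i.isLt
    have hk := k.isLt
    calc (i : ℕ) + (k : ℕ) * (2 ^ L / 2 ^ ℓ)
        < 2 ^ L / 2 ^ ℓ + (k : ℕ) * (2 ^ L / 2 ^ ℓ) := by omega
      _ = ((k : ℕ) + 1) * (2 ^ L / 2 ^ ℓ) := by ring
      _ ≤ 2 ^ ℓ * (2 ^ L / 2 ^ ℓ) := Nat.mul_le_mul_right _ (by omega)
      _ = 2 ^ L := two_pow_mul_div L ℓ h⟩

/-- The `k`-th element of the canonical column index set `C^(ℓ)_j` (0-based):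
`j·(N/2^ℓ) + k`, for `j ∈ Fin 2^ℓ`, `k ∈ Fin (N/2^ℓ)`, `N = 2^L`. -/
def colIdx (L ℓ : ℕ) (h : ℓ ≤ L) (j : Fin (2 ^ ℓ)) (k : Fin (2 ^ L / 2 ^ ℓ)) : Fin (2 ^ L) :=
  ⟨(j : ℕ) * (2 ^ L / 2 ^ ℓ) + (k : ℕ), by
    have hj := j.isLt
    have hk := k.isLt
    calc (j : ℕ) * (2 ^ L / 2 ^ ℓ) + (k : ℕ)
        < (j : ℕ) * (2 ^ L / 2 ^ ℓ) + (2 ^ L / 2 ^ ℓ) := by omega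
      _ = ((j : ℕ) + 1) * (2 ^ L / 2 ^ ℓ) := by ring
      _ ≤ 2 ^ ℓ * (2 ^ L / 2 ^ ℓ) := Nat.mul_le_mul_right _ (by omega)
      _ = 2 ^ L := two_pow_mul_div L ℓ h⟩

/-- The squared Frobenius norm `‖A‖_F²` of a complex matrix. -/
noncomputable def frobSq {m n : Type*} [Fintype m] [Fintype n] (A : Matrix m n ℂ) : ℝ :=
  ∑ i, ∑ j, ‖A i j‖ ^ 2


lemma rank_le_one_decomp {m n : Type*} [Fintype m] [Fintype n] (B : Matrix m n ℂ)
    (h : B.rank ≤ 1) : ∃ u : m → ℂ, ∃ v : n → ℂ, ∀ k l, B k l = u k * v l := by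
  rw [Matrix.rank] at h
  have hp : (LinearMap.range B.mulVecLin).IsPrincipal :=
    (Submodule.finrank_le_one_iff_isPrincipal _).mp h
  obtain ⟨a, ha⟩ := hp
  have hcol : ∀ l, ∃ c : ℂ, c • a = Bᵀ l := by
    intro l
    rw [← Submodule.mem_span_singleton, ← ha, Matrix.range_mulVecLin]
    exact Submodule.subset_span ⟨l, rfl⟩
  choose c hc using hcol
  refine ⟨a, c, fun k l => ?_⟩
  have := congrFun (hc l) k
  simp only [Pi.smul_apply, smul_eq_mul, Matrix.transpose_apply] at this
  rw [← this]; ring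

lemma blockEquiv_row (L ℓ : ℕ) (h : ℓ ≤ L) (i : Fin (2 ^ L / 2 ^ ℓ)) (k : Fin (2 ^ ℓ)) :
    blockEquiv L ℓ h (k, i) = rowIdx L ℓ h i k := by
  apply Fin.ext
  simp [blockEquiv, rowIdx, finProdFinEquiv]
  ring

lemma blockEquiv_col (L ℓ : ℕ) (h : ℓ ≤ L) (j : Fin (2 ^ ℓ)) (m : Fin (2 ^ L / 2 ^ ℓ)) :
    blockEquiv L ℓ h (j, m) = colIdx L ℓ h j m := by
  apply Fin.ext
  simp [blockEquiv, colIdx, finProdFinEquiv]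
  ring

/-- For `L ≥ 2`, `N = 2^L`, `ℓ ∈ {1,…,L-1}`: if every submatrix
`A_{R^(ℓ)_i, C^(ℓ)_j}` of `A ∈ ℂ^{N×N}` has rank at most `1`, then there exist
`X, Y ∈ ℂ^{N×N}` with `supp(X) ⊆ supp(J_{2^ℓ} ⊗ I_{N/2^ℓ})`,
`supp(Y) ⊆ supp(I_{2^ℓ} ⊗ J_{N/2^ℓ})` and `A = XY`. -/
theorem exists_monarch_factorization (L : ℕ) (hL : 2 ≤ L) (ℓ : ℕ) (hℓ1 : 1 ≤ ℓ)
    (hℓ2 : ℓ ≤ L - 1) (A : Matrix (Fin (2 ^ L)) (Fin (2 ^ L)) ℂ)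
    (hA : ∀ (i : Fin (2 ^ L / 2 ^ ℓ)) (j : Fin (2 ^ ℓ)),
      (A.submatrix (rowIdx L ℓ (by omega) i) (colIdx L ℓ (by omega) j)).rank ≤ 1) :
    ∃ X Y : Matrix (Fin (2 ^ L)) (Fin (2 ^ L)) ℂ,
      (∀ a b, X a b ≠ 0 → JkronI L ℓ (by omega) a b ≠ 0) ∧
      (∀ a b, Y a b ≠ 0 → IkronJ L ℓ (by omega) a b ≠ 0) ∧
      A = X * Y := by
  have hL' : ℓ ≤ L := by omega
  have hblock : ∀ (i : Fin (2 ^ L / 2 ^ ℓ)) (j : Fin (2 ^ ℓ)),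
      ∃ u : Fin (2 ^ ℓ) → ℂ, ∃ v : Fin (2 ^ L / 2 ^ ℓ) → ℂ,
        ∀ k m, A (rowIdx L ℓ hL' i k) (colIdx L ℓ hL' j m) = u k * v m := by
    intro i j
    exact rank_le_one_decomp _ (hA i j)
  choose u v huv using hblock
  set e := blockEquiv L ℓ hL' with he
  refine ⟨Matrix.of fun a b =>
      if (e.symm a).2 = (e.symm b).2 then u (e.symm a).2 (e.symm b).1 (e.symm a).1 else 0,
    Matrix.of fun a b =>
      if (e.symm a).1 = (e.symm b).1 then v (e.symm a).2 (e.symm a).1 (e.symm b).2 else 0,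
    ?_, ?_, ?_⟩
  · intro a b hX
    simp only [Matrix.of_apply, ne_eq, ite_eq_right_iff, not_forall] at hX
    obtain ⟨hq, -⟩ := hX
    simp only [JkronI, Matrix.reindex_apply, Matrix.submatrix_apply, Matrix.kroneckerMap_apply,
      Jmat, Matrix.of_apply, one_mul, ← he]
    rw [hq]
    simp [Matrix.one_apply]
  · intro a b hY
    simp only [Matrix.of_apply, ne_eq, ite_eq_right_iff, not_forall] at hY
    obtain ⟨hp, -⟩ := hY
    simp only [IkronJ, Matrix.reindex_apply, Matrix.submatrix_apply, Matrix.kroneckerMap_apply,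
      Jmat, Matrix.of_apply, mul_one, ← he]
    rw [hp]
    simp [Matrix.one_apply]
  · ext r c
    obtain ⟨⟨k, i⟩, rfl⟩ := e.surjective r
    obtain ⟨⟨j, m⟩, rfl⟩ := e.surjective c
    rw [Matrix.mul_apply, ← Equiv.sum_comp e, Fintype.sum_prod_type]
    simp only [Matrix.of_apply, Equiv.symm_apply_apply, ite_mul, mul_ite, zero_mul, mul_zero,
      Finset.sum_ite_eq, Finset.sum_ite_eq', Finset.mem_univ, if_true]
    rw [he, blockEquiv_row, blockEquiv_col, huv]
    symm
    rw [Finset.sum_eq_single j (fun b _ hb => by simp [hb]) (by simp)]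
    simp [Finset.sum_ite_eq]
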